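/- Let A be a commutative ring with a direct-sum ℤ-grading and let φ: A → A be a ring automorphism with φ(A_j) ⊆ A_j for every j. Extend the grading entrywise to n×n matrices over A and apply φ entrywise to matrices. Let g be an invertible n×n matrix over A with Gauss pair (L,U) (i.e. L, L⁻¹ ∈ 1 + Matₙ(A_{<0}), U, U⁻¹ ∈ Matₙ(A_{≥0}), g = L⁻¹U). If g⁻¹ = (φ g)ᵀ (transpose of the entrywise image of g under φ), then L⁻¹ = (φ L)ᵀ and U⁻¹ = (φ U)ᵀ. -/
import Mathlib


/-- The negative-degree part `A_{<0} = ⊕_{j<0} A_j` of a ℤ-graded ring. -/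
def negPart {A : Type*} [CommRing A] (𝒜 : ℤ → AddSubgroup A) : AddSubgroup A :=
  ⨆ j : {j : ℤ // j < 0}, 𝒜 j.1

/-- The nonnegative-degree part `A_{≥0} = ⊕_{j≥0} A_j` of a ℤ-graded ring. -/
def nonnegPart {A : Type*} [CommRing A] (𝒜 : ℤ → AddSubgroup A) : AddSubgroup A :=
  ⨆ j : {j : ℤ // 0 ≤ j}, 𝒜 j.1

/-- A Gauss pair `(L, U)` for an invertible `n × n` matrix `g` over a ℤ-graded
commutative ring: all entries of `L − 1` and `L⁻¹ − 1` lie in `A_{<0}`, all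
entries of `U` and `U⁻¹` lie in `A_{≥0}`, and `g = L⁻¹ * U`. -/
def IsMatrixGaussPair {A : Type*} [CommRing A] (𝒜 : ℤ → AddSubgroup A) {n : ℕ}
    (g : Matrix (Fin n) (Fin n) A) (L U : (Matrix (Fin n) (Fin n) A)ˣ) : Prop :=
  (∀ i j, ((L : Matrix (Fin n) (Fin n) A) - 1) i j ∈ negPart 𝒜) ∧
    (∀ i j, (((L⁻¹ : (Matrix (Fin n) (Fin n) A)ˣ) : Matrix (Fin n) (Fin n) A) - 1) i j
      ∈ negPart 𝒜) ∧
    (∀ i j, (U : Matrix (Fin n) (Fin n) A) i j ∈ nonnegPart 𝒜) ∧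
    (∀ i j, ((U⁻¹ : (Matrix (Fin n) (Fin n) A)ˣ) : Matrix (Fin n) (Fin n) A) i j
      ∈ nonnegPart 𝒜) ∧
    g = ((L⁻¹ : (Matrix (Fin n) (Fin n) A)ˣ) : Matrix (Fin n) (Fin n) A)
      * (U : Matrix (Fin n) (Fin n) A)

section Aux

open Matrix

variable {A : Type*} [CommRing A] (𝒜 : ℤ → AddSubgroup A)

lemma mem_negPart_of_mem {j : ℤ} (hj : j < 0) {x : A} (hx : x ∈ 𝒜 j) :
    x ∈ negPart 𝒜 :=
  le_iSup (fun j : {j : ℤ // j < 0} => 𝒜 j.1) ⟨j, hj⟩ hx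

lemma mem_nonnegPart_of_mem {j : ℤ} (hj : 0 ≤ j) {x : A} (hx : x ∈ 𝒜 j) :
    x ∈ nonnegPart 𝒜 :=
  le_iSup (fun j : {j : ℤ // 0 ≤ j} => 𝒜 j.1) ⟨j, hj⟩ hx

lemma negPart_induction {C : A → Prop} {x : A} (hx : x ∈ negPart 𝒜)
    (mem : ∀ j : ℤ, j < 0 → ∀ a ∈ 𝒜 j, C a) (zero : C 0)
    (add : ∀ a b, C a → C b → C (a + b)) : C x :=
  AddSubgroup.iSup_induction (C := C) (fun j : {j : ℤ // j < 0} => 𝒜 j.1) hx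
    (fun i a ha => mem i.1 i.2 a ha) zero add

lemma nonnegPart_induction {C : A → Prop} {x : A} (hx : x ∈ nonnegPart 𝒜)
    (mem : ∀ j : ℤ, 0 ≤ j → ∀ a ∈ 𝒜 j, C a) (zero : C 0)
    (add : ∀ a b, C a → C b → C (a + b)) : C x :=
  AddSubgroup.iSup_induction (C := C) (fun j : {j : ℤ // 0 ≤ j} => 𝒜 j.1) hx
    (fun i a ha => mem i.1 i.2 a ha) zero add

variable [GradedRing 𝒜]

lemma negPart_mul {a b : A} (ha : a ∈ negPart 𝒜) (hb : b ∈ negPart 𝒜) :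
    a * b ∈ negPart 𝒜 := by
  refine negPart_induction 𝒜 (C := fun a => a * b ∈ negPart 𝒜) ha (fun j hj a haj => ?_) (by simp [zero_mem]) (fun x y hx hy => ?_)
  · refine negPart_induction 𝒜 (C := fun b => a * b ∈ negPart 𝒜) hb (fun k hk b hbk => ?_) (by simp [zero_mem]) (fun x y hx hy => ?_)
    · exact mem_negPart_of_mem 𝒜 (by omega : j + k < 0) (SetLike.mul_mem_graded haj hbk)
    · simpa [mul_add] using add_mem hx hy
  · simpa [add_mul] using add_mem hx hy

lemma nonnegPart_mul {a b : A} (ha : a ∈ nonnegPart 𝒜) (hb : b ∈ nonnegPart 𝒜) :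
    a * b ∈ nonnegPart 𝒜 := by
  refine nonnegPart_induction 𝒜 (C := fun a => a * b ∈ nonnegPart 𝒜) ha (fun j hj a haj => ?_) (by simp [zero_mem]) (fun x y hx hy => ?_)
  · refine nonnegPart_induction 𝒜 (C := fun b => a * b ∈ nonnegPart 𝒜) hb (fun k hk b hbk => ?_) (by simp [zero_mem]) (fun x y hx hy => ?_)
    · exact mem_nonnegPart_of_mem 𝒜 (by omega : (0:ℤ) ≤ j + k)
        (SetLike.mul_mem_graded haj hbk)
    · simpa [mul_add] using add_mem hx hy
  · simpa [add_mul] using add_mem hx hy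

lemma nonnegPart_one : (1 : A) ∈ nonnegPart 𝒜 :=
  mem_nonnegPart_of_mem 𝒜 le_rfl (SetLike.one_mem_graded 𝒜)

variable (φ : A ≃+* A) (hφ : ∀ (j : ℤ), ∀ x ∈ 𝒜 j, φ x ∈ 𝒜 j)

include hφ in
lemma negPart_map {a : A} (ha : a ∈ negPart 𝒜) : φ a ∈ negPart 𝒜 := by
  refine negPart_induction 𝒜 (C := fun a => φ a ∈ negPart 𝒜) ha (fun j hj a haj => ?_) (by simp [zero_mem]) (fun x y hx hy => ?_)
  · exact mem_negPart_of_mem 𝒜 hj (hφ j a haj)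
  · simpa [map_add] using add_mem hx hy

include hφ in
lemma nonnegPart_map {a : A} (ha : a ∈ nonnegPart 𝒜) : φ a ∈ nonnegPart 𝒜 := by
  refine nonnegPart_induction 𝒜 (C := fun a => φ a ∈ nonnegPart 𝒜) ha (fun j hj a haj => ?_) (by simp [zero_mem]) (fun x y hx hy => ?_)
  · exact mem_nonnegPart_of_mem 𝒜 hj (hφ j a haj)
  · simpa [map_add] using add_mem hx hy

lemma negPart_decompose {x : A} (hx : x ∈ negPart 𝒜) (j : ℤ) (hj : 0 ≤ j) :
    ((DirectSum.decompose 𝒜 x) j : A) = 0 := by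
  refine negPart_induction 𝒜 (C := fun x => ((DirectSum.decompose 𝒜 x) j : A) = 0) hx (fun k hk a hak => ?_) (by simp [zero_mem]) (fun x y hx hy => ?_)
  · exact DirectSum.decompose_of_mem_ne 𝒜 hak (by omega : k ≠ j)
  · simp [DirectSum.decompose_add, hx, hy]

lemma nonnegPart_decompose {x : A} (hx : x ∈ nonnegPart 𝒜) (j : ℤ) (hj : j < 0) :
    ((DirectSum.decompose 𝒜 x) j : A) = 0 := by
  refine nonnegPart_induction 𝒜 (C := fun x => ((DirectSum.decompose 𝒜 x) j : A) = 0) hx (fun k hk a hak => ?_) (by simp [zero_mem]) (fun x y hx hy => ?_)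
  · exact DirectSum.decompose_of_mem_ne 𝒜 hak (by omega : k ≠ j)
  · simp [DirectSum.decompose_add, hx, hy]

lemma neg_inter_nonneg {x : A} (h1 : x ∈ negPart 𝒜) (h2 : x ∈ nonnegPart 𝒜) :
    x = 0 := by
  classical
  have key : ∀ j : ℤ, ((DirectSum.decompose 𝒜 x) j : A) = 0 := by
    intro j
    rcases lt_or_ge j 0 with hj | hj
    · exact nonnegPart_decompose 𝒜 h2 j hj
    · exact negPart_decompose 𝒜 h1 j hj
  calc x = ∑ i ∈ (DirectSum.decompose 𝒜 x).support, ((DirectSum.decompose 𝒜 x) i : A) :=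
        (DirectSum.sum_support_decompose 𝒜 x).symm
    _ = 0 := Finset.sum_eq_zero fun i _ => key i

end Aux

theorem gauss_pair_symmetry' {A : Type*} [CommRing A]
    (𝒜 : ℤ → AddSubgroup A) [GradedRing 𝒜]
    (φ : A ≃+* A) (hφ : ∀ (j : ℤ), ∀ x ∈ 𝒜 j, φ x ∈ 𝒜 j)
    {n : ℕ} (g L U : (Matrix (Fin n) (Fin n) A)ˣ)
    (hLU : IsMatrixGaussPair 𝒜 (g : Matrix (Fin n) (Fin n) A) L U)
    (hsym : ((g⁻¹ : (Matrix (Fin n) (Fin n) A)ˣ) : Matrix (Fin n) (Fin n) A)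
      = ((g : Matrix (Fin n) (Fin n) A).map φ).transpose) :
    ((L⁻¹ : (Matrix (Fin n) (Fin n) A)ˣ) : Matrix (Fin n) (Fin n) A)
      = ((L : Matrix (Fin n) (Fin n) A).map φ).transpose ∧
    ((U⁻¹ : (Matrix (Fin n) (Fin n) A)ˣ) : Matrix (Fin n) (Fin n) A)
      = ((U : Matrix (Fin n) (Fin n) A).map φ).transpose := by
  classical
  obtain ⟨hL, hLinv, hU, hUinv, hg⟩ := hLU
  have hψc : ⇑φ.toRingHom = ⇑φ := rfl
  have mapmul : ∀ M N : Matrix (Fin n) (Fin n) A, ((M * N).map φ).transpose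
      = (N.map φ).transpose * (M.map φ).transpose := by
    intro M N
    rw [← hψc, Matrix.map_mul, Matrix.transpose_mul]
  have mapone : ((1 : Matrix (Fin n) (Fin n) A).map φ).transpose = 1 := by
    rw [← hψc, Matrix.map_one _ (map_zero _) (map_one _), Matrix.transpose_one]
  have mk : ∀ V : (Matrix (Fin n) (Fin n) A)ˣ, ∃ Vφ : (Matrix (Fin n) (Fin n) A)ˣ,
      (Vφ : Matrix (Fin n) (Fin n) A) = ((V : Matrix (Fin n) (Fin n) A).map φ).transpose ∧
      ((Vφ⁻¹ : (Matrix (Fin n) (Fin n) A)ˣ) : Matrix (Fin n) (Fin n) A) = (((V⁻¹ : (Matrix (Fin n) (Fin n) A)ˣ) : Matrix (Fin n) (Fin n) A).map φ).transpose := by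
    intro V
    refine ⟨⟨((V : Matrix (Fin n) (Fin n) A).map φ).transpose, (((V⁻¹ : (Matrix (Fin n) (Fin n) A)ˣ) : Matrix (Fin n) (Fin n) A).map φ).transpose, ?_, ?_⟩,
      rfl, rfl⟩
    · rw [← mapmul, ← Units.val_mul, inv_mul_cancel, Units.val_one, mapone]
    · rw [← mapmul, ← Units.val_mul, mul_inv_cancel, Units.val_one, mapone]
  obtain ⟨Lφ, hLφ, hLφinv⟩ := mk L
  obtain ⟨Uφ, hUφ, hUφinv⟩ := mk U
  have hgu : g = L⁻¹ * U := Units.ext (by rw [hg]; rfl)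
  have hsymu : g⁻¹ = Uφ * Lφ⁻¹ := by
    apply Units.ext
    rw [Units.val_mul, hUφ, hLφinv, hsym, hgu, Units.val_mul, mapmul]
  have key : L * Lφ = U * Uφ := by
    have h2 : U⁻¹ * L = Uφ * Lφ⁻¹ := by rw [← hsymu, hgu]; group
    calc L * Lφ = U * (U⁻¹ * L) * Lφ := by group
      _ = U * (Uφ * Lφ⁻¹) * Lφ := by rw [h2]
      _ = U * Uφ := by group
  set M : Matrix (Fin n) (Fin n) A := (L : Matrix (Fin n) (Fin n) A) * (Lφ : Matrix (Fin n) (Fin n) A) with hM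
  have hMU : M = (U : Matrix (Fin n) (Fin n) A) * (Uφ : Matrix (Fin n) (Fin n) A) := by
    rw [hM, ← Units.val_mul, ← Units.val_mul, key]
  have hLφ1 : ∀ i j, ((Lφ : Matrix (Fin n) (Fin n) A) - 1) i j ∈ negPart 𝒜 := by
    intro i j
    have h1 : ((1 : Matrix (Fin n) (Fin n) A)) i j = φ ((1 : Matrix (Fin n) (Fin n) A) j i) := by
      rcases eq_or_ne i j with h | h
      · subst h; rw [Matrix.one_apply_eq, map_one]
      · rw [Matrix.one_apply_ne h, Matrix.one_apply_ne (Ne.symm h), map_zero]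
    have h2 : ((Lφ : Matrix (Fin n) (Fin n) A) - 1) i j = φ (((L : Matrix (Fin n) (Fin n) A) - 1) j i) := by
      simp [hLφ, Matrix.transpose_apply, Matrix.map_apply, Matrix.sub_apply, h1, map_sub]
    rw [h2]
    exact negPart_map 𝒜 φ hφ (hL j i)
  have hMneg : ∀ i j, (M - 1) i j ∈ negPart 𝒜 := by
    intro i j
    have expand : M - 1 = ((L : Matrix (Fin n) (Fin n) A) - 1) + ((Lφ : Matrix (Fin n) (Fin n) A) - 1)
        + ((L : Matrix (Fin n) (Fin n) A) - 1) * ((Lφ : Matrix (Fin n) (Fin n) A) - 1) := by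
      rw [hM]; noncomm_ring
    rw [expand]
    simp only [Matrix.add_apply, Matrix.mul_apply]
    refine add_mem (add_mem (hL i j) (hLφ1 i j)) (AddSubgroup.sum_mem _ fun k _ => ?_)
    exact negPart_mul 𝒜 (hL i k) (hLφ1 k j)
  have hMnonneg : ∀ i j, M i j ∈ nonnegPart 𝒜 := by
    intro i j
    rw [hMU]
    simp only [Matrix.mul_apply]
    refine AddSubgroup.sum_mem _ fun k _ => nonnegPart_mul 𝒜 (hU i k) ?_
    have h3 : (Uφ : Matrix (Fin n) (Fin n) A) k j = φ ((U : Matrix (Fin n) (Fin n) A) j k) := by simp [hUφ]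
    rw [h3]
    exact nonnegPart_map 𝒜 φ hφ (hU j k)
  have hM1 : M = 1 := by
    rw [← sub_eq_zero]
    ext i j
    refine neg_inter_nonneg 𝒜 (hMneg i j) ?_
    have h1 : (1 : Matrix (Fin n) (Fin n) A) i j ∈ nonnegPart 𝒜 := by
      rcases eq_or_ne i j with h | h
      · subst h; rw [Matrix.one_apply_eq]; exact nonnegPart_one 𝒜
      · rw [Matrix.one_apply_ne h]; exact zero_mem _
    simpa [Matrix.sub_apply] using sub_mem (hMnonneg i j) h1
  have hLLφ : L * Lφ = 1 := Units.ext (by rw [Units.val_mul, ← hM, hM1, Units.val_one])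
  have hUUφ : U * Uφ = 1 := by rw [← key, hLLφ]
  constructor
  · rw [← hLφ, ← (mul_eq_one_iff_inv_eq.mp hLLφ)]
  · rw [← hUφ, ← (mul_eq_one_iff_inv_eq.mp hUUφ)]

/-- If `φ` is a degree-preserving ring automorphism of a ℤ-graded commutative
ring and `g` is an invertible matrix with Gauss pair `(L, U)` satisfying the
symmetry `g⁻¹ = (φ g)ᵀ`, then `L⁻¹ = (φ L)ᵀ` and `U⁻¹ = (φ U)ᵀ`. -/
theorem gauss_pair_symmetry {A : Type*} [CommRing A]
    (𝒜 : ℤ → AddSubgroup A) [GradedRing 𝒜]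
    (φ : A ≃+* A) (hφ : ∀ (j : ℤ), ∀ x ∈ 𝒜 j, φ x ∈ 𝒜 j)
    {n : ℕ} (g L U : (Matrix (Fin n) (Fin n) A)ˣ)
    (hLU : IsMatrixGaussPair 𝒜 (g : Matrix (Fin n) (Fin n) A) L U)
    (hsym : ((g⁻¹ : (Matrix (Fin n) (Fin n) A)ˣ) : Matrix (Fin n) (Fin n) A)
      = ((g : Matrix (Fin n) (Fin n) A).map φ).transpose) :
    ((L⁻¹ : (Matrix (Fin n) (Fin n) A)ˣ) : Matrix (Fin n) (Fin n) A)
      = ((L : Matrix (Fin n) (Fin n) A).map φ).transpose ∧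
    ((U⁻¹ : (Matrix (Fin n) (Fin n) A)ˣ) : Matrix (Fin n) (Fin n) A)
      = ((U : Matrix (Fin n) (Fin n) A).map φ).transpose :=
  gauss_pair_symmetry' 𝒜 φ hφ g L U hLU hsym
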